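/- With {n} = A^{2n} − A^{−2n} and q = A^{−4}: for every N ≥ 1, ({2N}!)² agrees with q^{(3N²+N)/2} ({N}!)² · (1 − 2q^{−N−1} · ∑_{k≥0} q^{−k}) in the 2N+1 highest q-degree coefficients, i.e. ({2N}!)² ≐_{2N+1} q^{(3N²+N)/2}({N}!)²(1 − 2q^{−N−1}/(1−q^{−1})) where 1/(1−q^{−1}) is expanded as a formal power series in q^{−1}. -/

import Mathlib

/-! Split ∏_{k=1}^{2N} (1 - x^k) as P · Q with P = ∏_{k ≤ N} and Q = ∏_{N < k ≤ 2N}. Every factor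
of Q is 1 - (multiple of x^{N+1}), so modulo x^{2N+2} the products of two or more such terms
vanish: Q ≡ 1 - S and Q² ≡ 1 - 2S with S = ∑_{N < k ≤ 2N} x^k. Finally S agrees with the
geometric tail x^{N+1}/(1 - x) modulo x^{2N+1}. -/

open Finset PowerSeries

theorem sq_dvd_prod_one_sub_sub_one_sub_sum {ι R : Type*} [CommRing R] (s : Finset ι)
    (f : ι → R) {a : R} (h : ∀ i ∈ s, a ∣ f i) :
    a ^ 2 ∣ ∏ i ∈ s, (1 - f i) - (1 - ∑ i ∈ s, f i) := by
  classical
  induction s using Finset.induction_on with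
  | empty => simp
  | insert j s hj ih =>
    obtain ⟨D, hD⟩ := ih fun i hi => h i (mem_insert_of_mem hi)
    obtain ⟨b, hb⟩ := h j (mem_insert_self j s)
    obtain ⟨c, hc⟩ := dvd_sum fun i hi => h i (mem_insert_of_mem hi)
    rw [prod_insert hj, sum_insert hj]
    exact ⟨b * c + (1 - f j) * D, by linear_combination (1 - f j) * hD + f j * hc + a * c * hb⟩

theorem sq_dvd_prod_one_sub_sq_sub_one_sub_two_mul_sum {ι R : Type*} [CommRing R] (s : Finset ι)
    (f : ι → R) {a : R} (h : ∀ i ∈ s, a ∣ f i) :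
    a ^ 2 ∣ (∏ i ∈ s, (1 - f i)) ^ 2 - (1 - 2 * ∑ i ∈ s, f i) := by
  obtain ⟨D, hD⟩ := sq_dvd_prod_one_sub_sub_one_sub_sum s f h
  obtain ⟨c, hc⟩ := dvd_sum h
  exact ⟨D * (∏ i ∈ s, (1 - f i) + (1 - ∑ i ∈ s, f i)) + c ^ 2, by
    linear_combination (∏ i ∈ s, (1 - f i) + (1 - ∑ i ∈ s, f i)) * hD + (∑ i ∈ s, f i + a * c) * hc⟩

theorem PowerSeries.sum_Ico_X_pow {R : Type*} [CommRing R] {m n : ℕ} (hmn : m ≤ n) :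
    ∑ k ∈ Ico m n, (X : R⟦X⟧) ^ k = (X ^ m - X ^ n) * PowerSeries.mk 1 := by
  rw [← geom_sum_Ico_mul_neg X hmn, mul_assoc, mul_comm (1 - X), mk_one_mul_one_sub_eq_one,
    mul_one]

theorem PowerSeries.X_pow_dvd_X_pow_mul_mk_one_sub_sum_Ico {R : Type*} [CommRing R] {m n : ℕ}
    (hmn : m ≤ n) : (X : R⟦X⟧) ^ n ∣ X ^ m * PowerSeries.mk 1 - ∑ k ∈ Ico m n, X ^ k :=
  ⟨PowerSeries.mk 1, by rw [sum_Ico_X_pow hmn]; ring⟩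

theorem prod_Icc_one_two_mul {M : Type*} [CommMonoid M] (f : ℕ → M) (N : ℕ) :
    ∏ k ∈ Icc 1 (2 * N), f k = (∏ k ∈ Icc 1 N, f k) * ∏ k ∈ Icc (N + 1) (2 * N), f k := by
  rw [Icc_add_one_left_eq_Ioc, ← zero_add 1, Icc_add_one_left_eq_Ioc]
  exact (prod_Ioc_consecutive f (Nat.zero_le N) (by omega : N ≤ 2 * N)).symm

/- Encoding: with x = q^{-1} and (-1)^M {M}! = q^{M(M+1)/4} ∏_{k=1}^{M} (1 - x^k), both sides,
normalized to top q-degree 0, are power series in x, and ≐_{2N+1} compares the coefficients of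
x^0, …, x^{2N}; `mk fun _ => 1` is the expansion of 1/(1 - q^{-1}). -/
theorem qFac_two_mul_sq_truncation_general (N : ℕ) :
    ∀ d : ℕ, d < 2 * N + 1 →
      (PowerSeries.coeff (R := ℤ) d) ((∏ k ∈ Finset.Icc 1 (2 * N), (1 - PowerSeries.X ^ k)) ^ 2) =
      (PowerSeries.coeff (R := ℤ) d) ((∏ k ∈ Finset.Icc 1 N, (1 - PowerSeries.X ^ k)) ^ 2 *
        (1 - 2 * PowerSeries.X ^ (N + 1) * PowerSeries.mk (fun _ => (1 : ℤ)))) := by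
  set Q : ℤ⟦X⟧ := ∏ k ∈ Icc (N + 1) (2 * N), (1 - X ^ k)
  have hQ : (X : ℤ⟦X⟧) ^ (2 * N + 2) ∣ Q ^ 2 - (1 - 2 * ∑ k ∈ Icc (N + 1) (2 * N), X ^ k) := by
    rw [show 2 * N + 2 = (N + 1) * 2 by ring, pow_mul]
    exact sq_dvd_prod_one_sub_sq_sub_one_sub_two_mul_sum _ _ fun k hk =>
      pow_dvd_pow X (mem_Icc.mp hk).1
  have hS : (X : ℤ⟦X⟧) ^ (2 * N + 1) ∣
      X ^ (N + 1) * PowerSeries.mk 1 - ∑ k ∈ Icc (N + 1) (2 * N), X ^ k := by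
    rw [← Ico_add_one_right_eq_Icc]
    exact X_pow_dvd_X_pow_mul_mk_one_sub_sum_Ico (by omega)
  have hQS : (X : ℤ⟦X⟧) ^ (2 * N + 1) ∣ Q ^ 2 - (1 - 2 * X ^ (N + 1) * PowerSeries.mk 1) := by
    have := dvd_add ((pow_dvd_pow X (Nat.le_succ _)).trans hQ) (hS.mul_left 2)
    convert this using 1
    ring
  intro d hd
  rw [prod_Icc_one_two_mul, mul_pow, ← sub_eq_zero, ← map_sub, ← mul_sub]
  exact X_pow_dvd_iff.mp (hQS.mul_left _) d hd

theorem qFac_two_mul_sq_truncation (N : ℕ) (hN : 1 ≤ N) :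
    ∀ d : ℕ, d < 2 * N + 1 →
      (PowerSeries.coeff (R := ℤ) d) ((∏ k ∈ Finset.Icc 1 (2 * N), (1 - PowerSeries.X ^ k)) ^ 2) =
      (PowerSeries.coeff (R := ℤ) d) ((∏ k ∈ Finset.Icc 1 N, (1 - PowerSeries.X ^ k)) ^ 2 *
        (1 - 2 * PowerSeries.X ^ (N + 1) * PowerSeries.mk (fun _ => (1 : ℤ)))) :=
  qFac_two_mul_sq_truncation_general N
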